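/- arXiv:0806.1563 — 9 statements merged into one kernel-verified Lean document; each statement's English description precedes it below -/
import Mathlib

section
/- Let f : ℕ → {-1, 1} be a completely multiplicative function such that f(p) = -1 for some prime p. Then the sequence (f(n))_{n ≥ 1} is not eventually periodic. -/
theorem stmt_1 (f : ℕ → ℤ) (hf1 : f 1 = 1)
    (hmul : ∀ m n, 1 ≤ m → 1 ≤ n → f (m * n) = f m * f n)
    (hval : ∀ n, 1 ≤ n → f n = -1 ∨ f n = 1)
    (p : ℕ) (hp : p.Prime) (hfp : f p = -1) :
    ¬ ∃ M k, 1 ≤ k ∧ ∀ n, M ≤ n → f (n + k) = f n := by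
  rintro ⟨M, k, hk, hper⟩
  set N := max M 1 with hN
  have hN1 : 1 ≤ N := le_max_right _ _
  have hMN : M ≤ N := le_max_left _ _
  have hfk : f k = -1 ∨ f k = 1 := hval k hk
  have hstep : ∀ m, N ≤ m → f (m + 1) = f m := by
    intro m hm
    have hm1 : 1 ≤ m := hN1.trans hm
    have hkm : M ≤ k * m := le_trans hMN (le_trans hm (Nat.le_mul_of_pos_left m (by omega)))
    have h1 : f (k * m + k) = f (k * m) := hper _ hkm
    have h2 : f (k * (m + 1)) = f k * f (m + 1) := hmul k (m+1) hk (by omega)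
    have h3 : f (k * m) = f k * f m := hmul k m hk hm1
    have he : k * (m+1) = k * m + k := by ring
    rw [he, h1, h3] at h2
    rcases hfk with h | h <;> rw [h] at h2 <;> linarith
  have hconst : ∀ m, N ≤ m → f m = f N := by
    intro m hm
    induction m, hm using Nat.le_induction with
    | base => rfl
    | succ m hm ih => rw [hstep m hm, ih]
  have hN2 : f (N * N) = f N * f N := hmul N N hN1 hN1
  have hNN : N ≤ N * N := Nat.le_mul_of_pos_left N hN1
  rw [hconst _ hNN] at hN2
  have hfN : f N = 1 := by
    rcases hval N hN1 with h | h
    · rw [h] at hN2; linarith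
    · exact h
  have hpN : f (p * N) = f p * f N := hmul p N hp.one_lt.le hN1
  have hle : N ≤ p * N := Nat.le_mul_of_pos_left N hp.pos
  rw [hconst _ hle, hfN, hfp] at hpN
  linarith
end

section
/- Let f : ℕ → {-1, 1} be a completely multiplicative function with f(p) = -1 for some prime p, and suppose (f(n)) is eventually periodic with period k after index M. Then for any n with nk > M and f(p) = -1, f(pnk) = -f(nk), contradicting periodicity since pnk ≡ nk (mod k). -/
theorem stmt_2 (f : ℕ → ℤ) (hf1 : f 1 = 1)
    (hmul : ∀ m n, 1 ≤ m → 1 ≤ n → f (m * n) = f m * f n)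
    (hval : ∀ n, 1 ≤ n → f n = -1 ∨ f n = 1)
    (p : ℕ) (hp : p.Prime) (hfp : f p = -1)
    (M k : ℕ) (hk : 1 ≤ k)
    (hper : ∀ n, M ≤ n → f (n + k) = f n) :
    (∀ n, 1 ≤ n → M < n * k →
      f (p * n * k) = - f (n * k) ∧ p * n * k ≡ n * k [MOD k]) ∧ False := by
  have key : ∀ j n, M ≤ n → f (n + j * k) = f n := by
    intro j
    induction j with
    | zero => simp
    | succ j ih =>
      intro n hn
      have e : n + (j + 1) * k = n + j * k + k := by ring
      rw [e, hper (n + j * k) (le_trans hn (Nat.le_add_right _ _)), ih n hn]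
  obtain ⟨q, rfl⟩ : ∃ q, p = q + 1 := ⟨p - 1, (Nat.succ_pred_eq_of_pos hp.pos).symm⟩
  have main : ∀ n, 1 ≤ n → M < n * k →
      f ((q + 1) * n * k) = - f (n * k) ∧ (q + 1) * n * k ≡ n * k [MOD k] := by
    intro n hn hM
    constructor
    · have h1 : f ((q + 1) * (n * k)) = f (q + 1) * f (n * k) :=
        hmul _ _ hp.one_lt.le (le_trans hn (Nat.le_mul_of_pos_right n hk))
      rw [mul_assoc, h1, hfp]
      ring
    · have : (q + 1) * n * k % k = 0 :=
        Nat.mul_mod_left _ _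
      have h2 : n * k % k = 0 := Nat.mul_mod_left _ _
      unfold Nat.ModEq
      rw [this, h2]
  refine ⟨main, ?_⟩
  have hM : M < (M + 1) * k := lt_of_lt_of_le (Nat.lt_succ_self M)
    (Nat.le_mul_of_pos_right _ hk)
  have h1 := (main (M + 1) (Nat.le_add_left 1 M) hM).1
  have h2 : f ((M + 1) * k + (q * (M + 1)) * k) = f ((M + 1) * k) :=
    key _ _ hM.le
  have heq : (q + 1) * (M + 1) * k = (M + 1) * k + (q * (M + 1)) * k := by ring
  rw [heq, h2] at h1
  rcases hval ((M + 1) * k) (le_trans (Nat.le_add_left 1 M) (Nat.le_mul_of_pos_right _ hk)) with h | h <;>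
    rw [h] at h1 <;> omega
end

section
/- The sequence of values of the Liouville function λ(n) is not eventually periodic. -/
theorem stmt_3 :
    ¬ ∃ M k, 1 ≤ k ∧ ∀ n, M ≤ n →
      ((-1 : ℤ) ^ (ArithmeticFunction.cardFactors (n + k)) =
        (-1 : ℤ) ^ (ArithmeticFunction.cardFactors n)) := by
  rintro ⟨M, k, hk, H⟩
  set f : ℕ → ℤ := fun n => (-1 : ℤ) ^ (ArithmeticFunction.cardFactors n) with hf
  have hk0 : k ≠ 0 := by omega
  set N := max M 1 with hN
  -- step: for m ≥ N, f (m+1) = f m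
  have step : ∀ m, N ≤ m → f (m + 1) = f m := by
    intro m hm
    have hm1 : m ≠ 0 := by
      have := le_max_right M 1
      omega
    have hmm : m ≤ k * m := Nat.le_mul_of_pos_left m (by omega)
    have hkm : M ≤ k * m := by
      have := le_max_left M 1
      omega
    have h1 := H (k * m) hkm
    have e1 : k * m + k = k * (m + 1) := by ring
    rw [e1] at h1
    rw [ArithmeticFunction.cardFactors_mul hk0 hm1,
      ArithmeticFunction.cardFactors_mul hk0 (by omega : m + 1 ≠ 0),
      pow_add, pow_add] at h1
    have hne : ((-1 : ℤ) ^ (ArithmeticFunction.cardFactors k)) ≠ 0 := by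
      apply pow_ne_zero; norm_num
    exact mul_left_cancel₀ hne h1
  -- hence f is constant from N on
  have const : ∀ m, N ≤ m → f m = f N := by
    intro m hm
    induction m, hm using Nat.le_induction with
    | base => rfl
    | succ n hn ih => rw [step n hn, ih]
  obtain ⟨p, hpN, hp⟩ := Nat.exists_infinite_primes N
  have hp1 : f p = -1 := by
    simp [hf, ArithmeticFunction.cardFactors_apply_prime hp]
  have hp2 : f (p ^ 2) = 1 := by
    simp [hf, ArithmeticFunction.cardFactors_apply_prime_pow hp]
  have hpsq : N ≤ p ^ 2 := le_trans hpN (by nlinarith [hp.two_le])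
  have := (const p hpN).trans (const (p ^ 2) hpsq).symm
  rw [hp1, hp2] at this
  norm_num at this
end

section
/- The real number ∑_{n=1}^∞ λ(n) 2^{-n} is irrational, where λ is the Liouville function. -/
open ArithmeticFunction Filter
open scoped ArithmeticFunction.Omega

/-! If `x = ∑ aₙ 2^{-(n+1)}` with digits `aₙ = ±1` is rational with denominator `q`, then every
tail `Tₖ = ∑ a_{n+k} 2^{-(n+1)}` lies in `q⁻¹ ℤ`, because `T_{k+1} = 2 Tₖ - aₖ`. If the digits are
not eventually constant, `|Tₖ| < 1`, so the tails take finitely many values, and the sign of `Tₖ`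
is `aₖ`. Hence two equal tails force the digit sequence to be eventually periodic. The Liouville
function is not: `λ(2m) = -λ(m)`, while periodicity from `m` on with period `p ∣ m` would give
`λ(2m) = λ(m)`. -/

def EventuallyPeriodic {α : Type*} (a : ℕ → α) : Prop :=
  ∃ p, 0 < p ∧ ∃ N, ∀ n, N ≤ n → a (n + p) = a n

theorem EventuallyPeriodic.of_comp_succ {α : Type*} {f : ℕ → α}
    (h : EventuallyPeriodic fun n => f (n + 1)) : EventuallyPeriodic f := by
  obtain ⟨p, hp, N, hN⟩ := h
  refine ⟨p, hp, N + 1, fun n hn => ?_⟩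
  obtain ⟨m, rfl⟩ : ∃ m, n = m + 1 := ⟨n - 1, by omega⟩
  simpa only [Nat.add_right_comm m 1 p] using hN m (by omega)

theorem apply_add_mul_eq_of_apply_add_eq {α : Type*} {a : ℕ → α} {p N : ℕ}
    (h : ∀ n, N ≤ n → a (n + p) = a n) {n : ℕ} (hn : N ≤ n) (j : ℕ) : a (n + j * p) = a n := by
  induction j with
  | zero => simp
  | succ j ih =>
    rw [Nat.succ_mul, ← add_assoc, h _ (hn.trans (Nat.le_add_right _ _)), ih]

theorem not_eventuallyPeriodic_of_apply_two_mul_ne {α : Type*} {f : ℕ → α}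
    (hf : ∀ m, 0 < m → f (2 * m) ≠ f m) : ¬ EventuallyPeriodic f := by
  rintro ⟨p, hp, N, hN⟩
  set m := (N + 1) * p
  have hm : 0 < m := Nat.mul_pos N.succ_pos hp
  refine hf m hm ?_
  rw [two_mul]
  exact apply_add_mul_eq_of_apply_add_eq hN (Nat.le_mul_of_pos_right _ hp |>.trans' N.le_succ) _

theorem hasSum_one_div_two_pow_succ : HasSum (fun n : ℕ => (1 : ℝ) / 2 ^ (n + 1)) 1 := by
  simpa only [pow_succ, div_div, mul_comm] using hasSum_geometric_two' 1

section SignedBinary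

variable {a : ℕ → ℝ}

theorem summable_div_two_pow_succ (ha : ∀ n, |a n| ≤ 1) :
    Summable fun n => a n / 2 ^ (n + 1) :=
  hasSum_one_div_two_pow_succ.summable.of_norm_bounded fun n => by
    have h2 : (0 : ℝ) < 2 ^ (n + 1) := by positivity
    rw [Real.norm_eq_abs, abs_div, abs_of_pos h2]
    exact div_le_div_of_nonneg_right (ha n) h2.le

theorem abs_tsum_div_two_pow_succ_lt_one (ha : ∀ n, |a n| ≤ 1) (hlt : ∃ i, a i < 1)
    (hgt : ∃ j, -1 < a j) : |∑' n, a n / 2 ^ (n + 1)| < 1 := by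
  have hs := (summable_div_two_pow_succ ha).hasSum
  obtain ⟨i, hi⟩ := hlt
  obtain ⟨j, hj⟩ := hgt
  have h2 (n : ℕ) : (0 : ℝ) < 2 ^ (n + 1) := by positivity
  have hle (n : ℕ) : -(1 / 2 ^ (n + 1)) ≤ a n / 2 ^ (n + 1) := by
    rw [← neg_div]
    exact div_le_div_of_nonneg_right (abs_le.mp (ha n)).1 (h2 n).le
  have hge (n : ℕ) : a n / 2 ^ (n + 1) ≤ 1 / 2 ^ (n + 1) :=
    div_le_div_of_nonneg_right (abs_le.mp (ha n)).2 (h2 n).le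
  refine abs_lt.mpr ⟨hasSum_lt hle (i := j) ?_ hasSum_one_div_two_pow_succ.neg hs,
    hasSum_lt hge (i := i) ?_ hs hasSum_one_div_two_pow_succ⟩
  · rw [← neg_div]
    exact div_lt_div_of_pos_right hj (h2 j)
  · exact div_lt_div_of_pos_right hi (h2 i)

noncomputable def binaryTail (a : ℕ → ℝ) (k : ℕ) : ℝ := ∑' n, a (n + k) / 2 ^ (n + 1)

theorem binaryTail_zero : binaryTail a 0 = ∑' n, a n / 2 ^ (n + 1) := rfl

theorem binaryTail_succ (ha : ∀ n, |a n| ≤ 1) (k : ℕ) :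
    binaryTail a (k + 1) = 2 * binaryTail a k - a k := by
  have hsplit : binaryTail a k = a k / 2 + binaryTail a (k + 1) / 2 := by
    rw [binaryTail, binaryTail, (summable_div_two_pow_succ fun n => ha (n + k)).tsum_eq_zero_add,
      ← tsum_div_const]
    simp only [zero_add, pow_one, Nat.add_right_comm _ 1 k, add_assoc, div_div, ← pow_succ]
  linarith

section PlusMinusOne

variable (hpm : ∀ n, a n = 1 ∨ a n = -1)
include hpm

theorem abs_le_one_of_eq_one_or_eq_neg_one (n : ℕ) : |a n| ≤ 1 := by
  rcases hpm n with h | h <;> simp [h]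

theorem abs_binaryTail_lt_one (hnc : ¬ EventuallyConst a atTop) (k : ℕ) :
    |binaryTail a k| < 1 := by
  obtain ⟨j, hkj, hj⟩ : ∃ j, k ≤ j ∧ a j ≠ a k := by
    rw [eventuallyConst_atTop] at hnc
    push Not at hnc
    exact hnc k
  obtain ⟨i, rfl⟩ := Nat.exists_eq_add_of_le' hkj
  have h0 : a (0 + k) = a k := by rw [zero_add]
  have hsigns : (a k < 1 ∨ a (i + k) < 1) ∧ (-1 < a k ∨ -1 < a (i + k)) := by
    rcases hpm k with hk | hk <;> rcases hpm (i + k) with hi | hi <;> simp [hk, hi] at hj ⊢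
  refine abs_tsum_div_two_pow_succ_lt_one (fun n => abs_le_one_of_eq_one_or_eq_neg_one hpm _) ?_ ?_
  · rcases hsigns.1 with h | h
    exacts [⟨0, h0 ▸ h⟩, ⟨i, h⟩]
  · rcases hsigns.2 with h | h
    exacts [⟨0, h0 ▸ h⟩, ⟨i, h⟩]

variable (hT : ∀ k, |binaryTail a k| < 1)
include hT

/-- Since `Tₖ = (aₖ + T_{k+1}) / 2` and `|T_{k+1}| < 1`, the digit `aₖ` is the sign of `Tₖ`. -/
theorem eq_of_binaryTail_eq {k j : ℕ} (h : binaryTail a k = binaryTail a j) : a k = a j := by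
  have hk := binaryTail_succ (abs_le_one_of_eq_one_or_eq_neg_one hpm) k
  have hj := binaryTail_succ (abs_le_one_of_eq_one_or_eq_neg_one hpm) j
  have hk' := abs_lt.mp (hT (k + 1))
  have hj' := abs_lt.mp (hT (j + 1))
  rcases hpm k with hak | hak <;> rcases hpm j with haj | haj <;> linarith

theorem binaryTail_add_eq_of_eq {k j : ℕ} (h : binaryTail a k = binaryTail a j) (i : ℕ) :
    binaryTail a (k + i) = binaryTail a (j + i) := by
  induction i with
  | zero => exact h
  | succ i ih =>
    rw [← add_assoc, ← add_assoc, binaryTail_succ (abs_le_one_of_eq_one_or_eq_neg_one hpm),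
      binaryTail_succ (abs_le_one_of_eq_one_or_eq_neg_one hpm), ih,
      eq_of_binaryTail_eq hpm hT ih]

theorem eventuallyPeriodic_of_binaryTail_eq {k j : ℕ} (hkj : k < j)
    (h : binaryTail a k = binaryTail a j) : EventuallyPeriodic a := by
  refine ⟨j - k, Nat.sub_pos_of_lt hkj, k, fun n hn => ?_⟩
  have := eq_of_binaryTail_eq hpm hT (binaryTail_add_eq_of_eq hpm hT h (n - k))
  rwa [Nat.add_sub_cancel' hn, add_comm j, show n - k + j = n + (j - k) by omega, eq_comm] at this

/-- If `T₀ = p / q`, then every `q Tₖ` is an integer of absolute value `< q`: pigeonhole. -/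
theorem exists_lt_binaryTail_eq_of_eq_ratCast {q : ℚ} (hq : binaryTail a 0 = q) :
    ∃ k j, k < j ∧ binaryTail a k = binaryTail a j := by
  have hden : (0 : ℝ) < q.den := by exact_mod_cast q.pos
  have hint (k : ℕ) : ∃ c : ℤ, binaryTail a k * q.den = c := by
    induction k with
    | zero => exact ⟨q.num, by rw [hq]; exact_mod_cast Rat.mul_den_eq_num q⟩
    | succ k ih =>
      obtain ⟨c, hc⟩ := ih
      rw [binaryTail_succ (abs_le_one_of_eq_one_or_eq_neg_one hpm)]
      rcases hpm k with hak | hak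
      · exact ⟨2 * c - q.den, by push_cast; linear_combination 2 * hc - q.den * hak⟩
      · exact ⟨2 * c + q.den, by push_cast; linear_combination 2 * hc - q.den * hak⟩
  choose c hc using hint
  have hmem (k : ℕ) : c k ∈ Set.Ioo (-(q.den : ℤ)) q.den := by
    have : |(c k : ℝ)| < q.den := by
      rw [← hc, abs_mul, abs_of_pos hden]
      exact mul_lt_of_lt_one_left hden (hT k)
    exact abs_lt.mp (by exact_mod_cast this)
  obtain ⟨k, -, j, -, hne, hkj⟩ :=
    Set.infinite_univ.exists_ne_map_eq_of_mapsTo (fun k _ => hmem k) (Set.finite_Ioo _ _)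
  have heq : binaryTail a k = binaryTail a j :=
    mul_right_cancel₀ hden.ne' ((hc k).trans (hkj ▸ (hc j).symm))
  rcases hne.lt_or_gt with h | h
  exacts [⟨k, j, h, heq⟩, ⟨j, k, h, heq.symm⟩]

end PlusMinusOne

theorem irrational_tsum_div_two_pow_succ (hpm : ∀ n, a n = 1 ∨ a n = -1)
    (hper : ¬ EventuallyPeriodic a) : Irrational (∑' n, a n / 2 ^ (n + 1)) := by
  have hnc : ¬ EventuallyConst a atTop := fun hc =>
    hper ⟨1, one_pos, eventuallyConst_atTop_nat.mp hc⟩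
  have hT := abs_binaryTail_lt_one hpm hnc
  rw [← binaryTail_zero]
  rintro ⟨q, hq⟩
  obtain ⟨k, j, hkj, h⟩ := exists_lt_binaryTail_eq_of_eq_ratCast hpm hT hq.symm
  exact hper (eventuallyPeriodic_of_binaryTail_eq hpm hT hkj h)

end SignedBinary

theorem stmt_4 :
    Irrational (∑' n : ℕ,
      ((-1 : ℝ) ^ (ArithmeticFunction.cardFactors (n + 1))) / 2 ^ (n + 1)) := by
  refine irrational_tsum_div_two_pow_succ (fun n => neg_one_pow_eq_or ℝ _) fun h => ?_
  refine not_eventuallyPeriodic_of_apply_two_mul_ne (fun m hm => ?_)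
    (h.of_comp_succ (f := fun n => (-1 : ℝ) ^ Ω n))
  rw [cardFactors_mul two_ne_zero hm.ne', cardFactors_apply_prime Nat.prime_two, pow_add,
    pow_one, neg_one_mul]
  exact neg_ne_self.mpr (pow_ne_zero _ (neg_ne_zero.mpr one_ne_zero))
end

section
/- The sequence of values of the Möbius function μ(n) is not eventually periodic. -/
/-!
If `μ` had period `k` from `M` on, pick a prime `p > M` with `p ≡ 1 [MOD k]` (such primes exist by
the cyclotomic argument behind `Nat.exists_prime_gt_modEq_one`). Then `p ^ 2 ≡ 1 ≡ p [MOD k]`,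
so periodicity would force `μ (p ^ 2) = μ p`, i.e. `0 = -1`.
-/

open ArithmeticFunction
open scoped ArithmeticFunction.Moebius

theorem apply_add_mul_eq_of_eventually_periodic {α : Type*} {f : ℕ → α} {M k : ℕ}
    (hper : ∀ n, M ≤ n → f (n + k) = f n) {n : ℕ} (hn : M ≤ n) (j : ℕ) :
    f (n + j * k) = f n := by
  induction j with
  | zero => simp
  | succ j ih =>
    rw [Nat.succ_mul, ← Nat.add_assoc, hper _ (hn.trans (Nat.le_add_right _ _)), ih]

theorem apply_eq_of_modEq_of_eventually_periodic {α : Type*} {f : ℕ → α} {M k : ℕ}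
    (hper : ∀ n, M ≤ n → f (n + k) = f n) {m n : ℕ} (hm : M ≤ m) (hmn : m ≤ n)
    (hmod : n ≡ m [MOD k]) : f n = f m := by
  obtain ⟨j, hj⟩ := (Nat.modEq_iff_dvd' hmn).mp hmod.symm
  rw [← apply_add_mul_eq_of_eventually_periodic hper hm j, Nat.mul_comm j k, ← hj,
    Nat.add_sub_cancel' hmn]

theorem Nat.sq_modEq_self_of_modEq_one {p k : ℕ} (hp : p ≡ 1 [MOD k]) : p ^ 2 ≡ p [MOD k] :=
  calc p ^ 2 ≡ 1 ^ 2 [MOD k] := hp.pow 2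
    _ = 1 := one_pow 2
    _ ≡ p [MOD k] := hp.symm

theorem stmt_6 :
    ¬ ∃ M k, 1 ≤ k ∧ ∀ n, M ≤ n →
      ArithmeticFunction.moebius (n + k) = ArithmeticFunction.moebius n := by
  rintro ⟨M, k, hk, hper⟩
  obtain ⟨p, hp, hMp, hp1⟩ := Nat.exists_prime_gt_modEq_one M (Nat.one_le_iff_ne_zero.mp hk)
  have h : μ (p ^ 2) = μ p :=
    apply_eq_of_modEq_of_eventually_periodic hper hMp.le (Nat.le_self_pow two_ne_zero p)
      (Nat.sq_modEq_self_of_modEq_one hp1)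
  rw [moebius_apply_prime hp, moebius_apply_prime_pow hp two_ne_zero] at h
  exact absurd h (by decide)
end

section
/- The real number ∑_{n=1}^∞ μ(n) 3^{-n} is irrational, where μ is the Möbius function. -/
/-!
Let `x_m = ∑ e_(m+k) b^-(k+1)` be the tails of a base-`b` expansion with digits in `{-1, 0, 1}`,
`b ≥ 3`. Then `x_(m+1) = b x_m - e_m`, so if `x_0 = a / d` every `d x_m` is an integer. A tail
whose leading digit is nonzero is nonzero, since the remaining digits contribute at most
`1 / (b (b - 1)) < 1 / b`. Taking `m` at the start of a run of `d` zero digits makes `d x_m` a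
nonzero integer of absolute value at most `d b^-d / (b - 1) < 1`. For the Möbius function such
runs exist by the Chinese remainder theorem (make `m + k + 1` divisible by the square of the
`k`-th prime), and `μ p = -1` at every prime `p` supplies infinitely many nonzero digits.
-/

open ArithmeticFunction Filter Function
open scoped ArithmeticFunction.Moebius

noncomputable def digitSum (b : ℕ) (e : ℕ → ℤ) : ℝ := ∑' k, (e k : ℝ) / (b : ℝ) ^ (k + 1)

section DigitSum

variable {b : ℕ} {e : ℕ → ℤ}

lemma norm_digit_div_pow_le (he : ∀ k, |e k| ≤ 1) (k : ℕ) :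
    ‖(e k : ℝ) / (b : ℝ) ^ (k + 1)‖ ≤ (b⁻¹ : ℝ) ^ (k + 1) := by
  rw [Real.norm_eq_abs, abs_div, abs_pow, Nat.abs_cast, inv_pow, inv_eq_one_div]
  exact div_le_div_of_nonneg_right (by exact_mod_cast he k) (by positivity)

lemma hasSum_inv_pow_succ (hb : 1 < b) :
    HasSum (fun k : ℕ => (b⁻¹ : ℝ) ^ (k + 1)) (1 / (b - 1)) := by
  have hb' : (1 : ℝ) < b := by exact_mod_cast hb
  have h := (hasSum_geometric_of_lt_one (by positivity) (inv_lt_one_of_one_lt₀ hb')).mul_left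
    (b⁻¹ : ℝ)
  have hsum : (b : ℝ)⁻¹ * (1 - (b : ℝ)⁻¹)⁻¹ = 1 / (b - 1) := by
    field_simp
  simpa only [← pow_succ', hsum] using h

lemma summable_digitSum (hb : 1 < b) (he : ∀ k, |e k| ≤ 1) :
    Summable fun k => (e k : ℝ) / (b : ℝ) ^ (k + 1) :=
  (hasSum_inv_pow_succ hb).summable.of_norm_bounded (norm_digit_div_pow_le he)

lemma abs_digitSum_le (hb : 1 < b) (he : ∀ k, |e k| ≤ 1) : |digitSum b e| ≤ 1 / (b - 1) :=
  tsum_of_norm_bounded (hasSum_inv_pow_succ hb) (norm_digit_div_pow_le he)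

lemma digitSum_eq_div (hb : 1 < b) (he : ∀ k, |e k| ≤ 1) :
    digitSum b e = (e 0 + digitSum b fun k => e (k + 1)) / b := by
  rw [digitSum, (summable_digitSum hb he).tsum_eq_zero_add, digitSum, add_div, ← tsum_div_const]
  congr 1
  · simp
  · congr 1 with k
    rw [div_div, ← pow_succ]

lemma digitSum_eq_shift_div_pow (hb : 1 < b) (he : ∀ k, |e k| ≤ 1) {L : ℕ}
    (hzero : ∀ k < L, e k = 0) : digitSum b e = digitSum b (fun k => e (k + L)) / b ^ L := by
  induction L generalizing e with
  | zero => simp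
  | succ L ih =>
    rw [digitSum_eq_div hb he, hzero 0 L.succ_pos, Int.cast_zero, zero_add,
      ih (fun k => he (k + 1)) (fun k hk => hzero (k + 1) (by omega)), div_div, ← pow_succ]
    simp only [add_assoc]

lemma digitSum_ne_zero (hb : 2 < b) (he : ∀ k, |e k| ≤ 1) (h : ∃ k, e k ≠ 0) :
    digitSum b e ≠ 0 := by
  classical
  have hb' : (2 : ℝ) < b := by exact_mod_cast hb
  rw [digitSum_eq_shift_div_pow hb.le he fun _ hk => not_not.mp (Nat.find_min h hk),
    digitSum_eq_div hb.le fun k => he _]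
  refine div_ne_zero (div_ne_zero ?_ (by positivity)) (by positivity)
  have hlead : (1 : ℝ) ≤ |(e (0 + Nat.find h) : ℝ)| := by
    rw [zero_add]
    exact_mod_cast Int.one_le_abs (Nat.find_spec h)
  have htail := abs_digitSum_le hb.le fun k => he (k + 1 + Nat.find h)
  have hlt : 1 / ((b : ℝ) - 1) < 1 := by
    rw [div_lt_one (by linarith)]
    linarith
  intro hsum
  rw [add_eq_zero_iff_eq_neg] at hsum
  rw [hsum, abs_neg] at hlead
  linarith

lemma exists_int_eq_mul_digitSum_shift (hb : 1 < b) (he : ∀ k, |e k| ≤ 1) {d : ℤ}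
    (h : ∃ z : ℤ, d * digitSum b e = z) (m : ℕ) :
    ∃ z : ℤ, d * digitSum b (fun k => e (k + m)) = z := by
  induction m with
  | zero => simpa using h
  | succ m ih =>
    obtain ⟨z, hz⟩ := ih
    refine ⟨b * z - d * e m, ?_⟩
    have hb' : (b : ℝ) ≠ 0 := by positivity
    rw [digitSum_eq_div hb fun k => he _] at hz
    push_cast
    rw [← hz]
    field_simp
    simp only [zero_add, add_assoc, add_comm 1 m]
    ring

theorem irrational_digitSum (hb : 2 < b) (he : ∀ k, |e k| ≤ 1) (hnz : ∃ᶠ k in atTop, e k ≠ 0)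
    (hrun : ∀ L, ∃ m, ∀ k < L, e (k + m) = 0) : Irrational (digitSum b e) := by
  rintro ⟨q, hq⟩
  set d := q.den
  obtain ⟨m, hm⟩ := hrun d
  have hnum : (d : ℤ) * digitSum b e = q.num := by
    rw [← hq]
    exact_mod_cast q.den_mul_eq_num
  obtain ⟨z, hz⟩ := exists_int_eq_mul_digitSum_shift hb.le he ⟨q.num, by exact_mod_cast hnum⟩ m
  set t := digitSum b fun k => e (k + d + m)
  have hshift : digitSum b (fun k => e (k + m)) = t / b ^ d := by
    rw [digitSum_eq_shift_div_pow hb.le (fun k => he _) hm]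
  have ht : t ≠ 0 := by
    refine digitSum_ne_zero hb (fun k => he _) ?_
    obtain ⟨n, hn, hen⟩ := frequently_atTop.mp hnz (d + m)
    exact ⟨n - (d + m), by rwa [add_assoc, Nat.sub_add_cancel hn]⟩
  have hb' : (2 : ℝ) < b := by exact_mod_cast hb
  have hpow : (0 : ℝ) < b ^ d := by positivity
  have hd : (0 : ℝ) < d := by exact_mod_cast q.den_pos
  have hdpow : (d : ℝ) < b ^ d := by exact_mod_cast Nat.lt_pow_self (by omega)
  have htle : |t| ≤ 1 :=
    (abs_digitSum_le hb.le fun k => he _).trans ((div_le_one (by linarith)).mpr (by linarith))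
  rw [hshift, Int.cast_natCast] at hz
  have hz0 : (z : ℝ) ≠ 0 := hz ▸ mul_ne_zero hd.ne' (div_ne_zero ht hpow.ne')
  have hzlt : |(z : ℝ)| < 1 := by
    rw [← hz, abs_mul, abs_div, abs_of_pos hd, abs_of_pos hpow, mul_div_assoc', div_lt_one hpow]
    nlinarith
  exact hz0 (by exact_mod_cast Int.abs_lt_one_iff.mp (by exact_mod_cast hzlt))

end DigitSum

lemma exists_run_not_squarefree (L : ℕ) : ∃ m, ∀ k < L, ¬ Squarefree (k + m + 1) := by
  set p := Nat.nth Nat.Prime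
  have hp : ∀ k, (p k).Prime := Nat.prime_nth_prime
  have hcop : Set.Pairwise (Finset.range L : Set ℕ) (Nat.Coprime on fun k => p k ^ 2) :=
    fun i _ j _ hij => ((Nat.coprime_primes (hp i) (hp j)).mpr
      ((Nat.nth_injective Nat.infinite_setOfPred_prime).ne hij)).pow 2 2
  obtain ⟨m, hm⟩ := Nat.chineseRemainderOfFinset (fun k => (k + 1) * (p k ^ 2 - 1))
    (fun k => p k ^ 2) (Finset.range L) (fun k _ => pow_ne_zero 2 (hp k).ne_zero) hcop
  -- `(k + 1) * (p k ^ 2 - 1) ≡ -(k + 1)`, so `p k ^ 2 ∣ k + m + 1`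
  refine ⟨m, fun k hk hsq => Nat.squarefree_iff_prime_squarefree.mp hsq (p k) (hp k) ?_⟩
  rw [← sq, ← Nat.modEq_zero_iff_dvd]
  have h1 : 1 ≤ p k ^ 2 := Nat.one_le_pow _ _ (hp k).pos
  calc k + m + 1 ≡ (k + 1) * (p k ^ 2 - 1) + (k + 1) [MOD p k ^ 2] := by
        rw [add_comm k m, add_assoc]
        exact (hm k (Finset.mem_range.mpr hk)).add_right _
    _ = (k + 1) * p k ^ 2 := by
        zify [h1]
        ring
    _ ≡ 0 [MOD p k ^ 2] := Nat.modEq_zero_iff_dvd.mpr (dvd_mul_left _ _)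

lemma frequently_moebius_ne_zero : ∃ᶠ n in atTop, μ n ≠ 0 :=
  frequently_atTop.mpr fun a => by
    obtain ⟨p, hap, hp⟩ := Nat.exists_infinite_primes a
    exact ⟨p, hap, by simp [moebius_apply_prime hp]⟩

theorem stmt_7 :
    Irrational (∑' n : ℕ,
      ((ArithmeticFunction.moebius (n + 1) : ℝ)) / 3 ^ (n + 1)) := by
  have hshift : ∃ᶠ n in atTop, μ (n + 1) ≠ 0 := by
    rw [← frequently_map (P := fun n => μ n ≠ 0), map_add_atTop_eq_nat]
    exact frequently_moebius_ne_zero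
  have h := irrational_digitSum (b := 3) (e := fun n => μ (n + 1)) (by norm_num)
    (fun _ => abs_moebius_le_one) hshift fun L => (exists_run_not_squarefree L).imp
      fun m hm k hk => moebius_eq_zero_of_not_squarefree (hm k hk)
  simpa only [digitSum, Nat.cast_ofNat] using h
end

section
/- (Szegő/Duffin–Schaeffer corollary) A power series ∑ c_n z^n whose coefficients c_n take values in a finite set of integers and which represents a rational function p(z)/q(z) has an eventually periodic coefficient sequence. -/
/-!
Comparing the coefficients of `X ^ (n + deg q)` in `q * F = p` for large `n` shows that the
coefficients `c n` of `F` satisfy a linear recurrence from some point on, whose leading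
coefficient is the lowest nonzero coefficient of `q`; over a domain, a window of `e` consecutive
coefficients therefore determines the next one. Since the `c n` take finitely many values, so do
the windows, and by pigeonhole two windows at different positions `a < a + k` coincide. The
recurrence then propagates the equality, so `c (n + k) = c n` for all `n ≥ a`.
-/

open Polynomial PowerSeries Finset

theorem PowerSeries.coeff_coe_mul_eq_sum_range {R : Type*} [Semiring R] (q : R[X]) (F : R⟦X⟧)
    {n : ℕ} (hn : q.natDegree ≤ n) :
    coeff n ((q : R⟦X⟧) * F) = ∑ i ∈ range (q.natDegree + 1), q.coeff i * coeff (n - i) F := by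
  rw [coeff_mul,
    Finset.Nat.sum_antidiagonal_eq_sum_range_succ (fun i j => coeff i (q : R⟦X⟧) * coeff j F)]
  simp only [Polynomial.coeff_coe]
  refine (Finset.sum_subset (range_subset_range.2 (by omega)) fun i _ hi => ?_).symm
  rw [coeff_eq_zero_of_natDegree_lt (by simpa using hi), zero_mul]

theorem PowerSeries.coeff_add_eq_of_window_eq {R : Type*} [Ring R] [NoZeroDivisors R]
    {F : R⟦X⟧} {p q : R[X]} (hq : q ≠ 0) (h : (q : R⟦X⟧) * F = p) {a b : ℕ}
    (ha : p.natDegree < a) (hb : p.natDegree < b)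
    (hwin : ∀ j < q.natDegree - q.natTrailingDegree, coeff (a + j) F = coeff (b + j) F) :
    coeff (a + (q.natDegree - q.natTrailingDegree)) F =
      coeff (b + (q.natDegree - q.natTrailingDegree)) F := by
  set d := q.natDegree
  set m := q.natTrailingDegree
  have hmd : m ≤ d := natTrailingDegree_le_natDegree q
  have hrec : ∀ n, p.natDegree < n →
      ∑ i ∈ range (d + 1), q.coeff i * coeff (n + d - i) F = 0 := fun n hn => by
    rw [← coeff_coe_mul_eq_sum_range q F (by omega), h, Polynomial.coeff_coe,
      coeff_eq_zero_of_natDegree_lt (by omega)]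
  -- Below `m` the coefficients of `q` vanish, above `m` they meet equal window entries.
  have hdiff : q.coeff m * (coeff (a + d - m) F - coeff (b + d - m) F) = 0 := calc
    _ = ∑ i ∈ range (d + 1), q.coeff i * (coeff (a + d - i) F - coeff (b + d - i) F) := by
      refine Eq.symm (sum_eq_single m (fun i hi him => ?_)
        fun hm => (hm (mem_range.2 (by omega))).elim)
      rcases lt_or_gt_of_ne him with hlt | hgt
      · rw [coeff_eq_zero_of_lt_natTrailingDegree hlt, zero_mul]
      · have hid : i ≤ d := Nat.lt_succ_iff.1 (mem_range.1 hi)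
        rw [show a + d - i = a + (d - i) by omega, show b + d - i = b + (d - i) by omega,
          hwin (d - i) (by omega), sub_self, mul_zero]
    _ = 0 := by simp only [mul_sub, sum_sub_distrib, hrec a ha, hrec b hb, sub_self]
  have hlead : q.coeff m ≠ 0 := mt trailingCoeff_eq_zero.1 hq
  rw [← Nat.add_sub_assoc hmd, ← Nat.add_sub_assoc hmd]
  exact sub_eq_zero.1 ((mul_eq_zero.1 hdiff).resolve_left hlead)

section WindowRecurrence

variable {α : Type*} {c : ℕ → α} {e N : ℕ}

theorem periodic_from_of_window_eq
    (hdet : ∀ a b, N ≤ a → N ≤ b → (∀ j < e, c (a + j) = c (b + j)) → c (a + e) = c (b + e))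
    {a k : ℕ} (ha : N ≤ a) (hwin : ∀ j < e, c (a + j) = c (a + k + j)) :
    ∀ n, a ≤ n → c (n + k) = c n := by
  intro n
  induction n using Nat.strong_induction_on with
  | _ n ih =>
    intro hn
    by_cases hne : n < a + e
    · obtain ⟨j, hj, rfl⟩ : ∃ j < e, n = a + j := ⟨n - a, by omega, by omega⟩
      rw [hwin j hj, add_right_comm]
    · have := hdet (n - e) (n - e + k) (by omega) (by omega) fun j hj => by
        rw [add_right_comm, ih (n - e + j) (by omega) (by omega)]
      rwa [Nat.sub_add_cancel (by omega), add_right_comm, Nat.sub_add_cancel (by omega),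
        eq_comm] at this

theorem exists_window_eq (hc : (Set.range c).Finite) (e N : ℕ) :
    ∃ a k, N ≤ a ∧ 0 < k ∧ ∀ j < e, c (a + j) = c (a + k + j) := by
  obtain ⟨a, b, hab, hwin⟩ := Set.Finite.exists_lt_map_eq_of_forall_mem
    (f := fun n (j : Fin e) => c (N + n + j)) (t := Set.univ.pi fun _ => Set.range c)
    (fun n => Set.mem_univ_pi.2 fun j => ⟨_, rfl⟩) (Set.Finite.pi fun _ => hc)
  refine ⟨N + a, b - a, by omega, by omega, fun j hj => ?_⟩
  rw [show N + a + (b - a) = N + b by omega]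
  exact congrFun hwin ⟨j, hj⟩

theorem exists_eventually_periodic_of_window_determined (hc : (Set.range c).Finite)
    (hdet : ∀ a b, N ≤ a → N ≤ b → (∀ j < e, c (a + j) = c (b + j)) → c (a + e) = c (b + e)) :
    ∃ M k, 1 ≤ k ∧ ∀ n, M ≤ n → c (n + k) = c n := by
  obtain ⟨a, k, ha, hk, hwin⟩ := exists_window_eq hc e N
  exact ⟨a, k, hk, periodic_from_of_window_eq hdet ha hwin⟩

end WindowRecurrence

theorem stmt_10 (F : PowerSeries ℤ) (S : Finset ℤ)
    (hS : ∀ n, PowerSeries.coeff (R := ℤ) n F ∈ S)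
    (p q : Polynomial ℤ) (hq : q ≠ 0)
    (hrat : (q : PowerSeries ℤ) * F = (p : PowerSeries ℤ)) :
    ∃ M k, 1 ≤ k ∧ ∀ n, M ≤ n →
      PowerSeries.coeff (R := ℤ) (n + k) F = PowerSeries.coeff (R := ℤ) n F := by
  have hfin : (Set.range fun n => coeff n F).Finite :=
    S.finite_toSet.subset (Set.range_subset_iff.2 hS)
  exact exists_eventually_periodic_of_window_determined (N := p.natDegree + 1) hfin
    fun a b ha hb => coeff_add_eq_of_window_eq hq hrat ha hb
end

section
/- The formal power series ∑_{n=1}^∞ λ(n) z^n ∈ ℤ[[z]] is not a rational function, i.e., there are no polynomials p, q ∈ ℤ[z] with q ≠ 0 such that q(z) · ∑ λ(n) z^n = p(z) as formal power series. -/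
/-!
If `q * ∑ λ(n) zⁿ = p` with `q ≠ 0`, first cancel the power of `z` dividing `q`, so that
`q(0) ≠ 0`. Comparing coefficients beyond `deg p` then gives a linear recurrence whose
coefficient at the newest term is `q(0)`, so in the integral domain `ℤ` each value `λ(n + d)` is
determined by the `d` preceding ones. As `λ` takes only finitely many values, two windows of
length `d` coincide and `λ` is eventually periodic, with some period `T`. This is impossible:
for a large multiple `n` of `T`, periodicity gives `λ(2n) = λ(n)`, whereas `λ(2n) = -λ(n) ≠ 0`.
-/

open Polynomial Finset Filter ArithmeticFunction
open scoped PowerSeries ArithmeticFunction.Omega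

theorem coeff_add_natDegree_coe_mul {R : Type*} [Semiring R] (q : R[X]) (f : R⟦X⟧) (m : ℕ) :
    PowerSeries.coeff (m + q.natDegree) ((q : R⟦X⟧) * f) =
      ∑ i ∈ range (q.natDegree + 1), q.coeff i * PowerSeries.coeff (m + q.natDegree - i) f := by
  have hsum : (q : R⟦X⟧) =
      ∑ i ∈ range (q.natDegree + 1), PowerSeries.C (q.coeff i) * PowerSeries.X ^ i := by
    conv_lhs => rw [as_sum_range_C_mul_X_pow q]
    rw [← coeToPowerSeries.ringHom_apply, map_sum]
    simp
  rw [hsum, Finset.sum_mul, map_sum]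
  refine Finset.sum_congr rfl fun i hi => ?_
  rw [mul_assoc, PowerSeries.coeff_C_mul, PowerSeries.coeff_X_pow_mul',
    if_pos (by have := mem_range.1 hi; omega)]

section WindowDetermined

variable {R : Type*} [CommRing R] [IsDomain R]

theorem exists_coeff_zero_ne_zero_mul_eq {q p : R[X]} {f : R⟦X⟧} (hq : q ≠ 0)
    (h : (q : R⟦X⟧) * f = p) : ∃ r s : R[X], r.coeff 0 ≠ 0 ∧ (r : R⟦X⟧) * f = s := by
  obtain ⟨r, hqr, hr⟩ := exists_eq_pow_rootMultiplicity_mul_and_not_dvd q hq 0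
  set t := q.rootMultiplicity 0
  rw [C_0, sub_zero] at hqr hr
  have hpt : (PowerSeries.X : R⟦X⟧) ^ t ∣ p := ⟨r * f, by rw [← h, hqr]; push_cast; ring⟩
  obtain ⟨s, rfl⟩ : X ^ t ∣ p := X_pow_dvd_iff.2 fun i hi => by
    simpa using PowerSeries.X_pow_dvd_iff.1 hpt i hi
  refine ⟨r, s, fun h0 => hr (X_dvd_iff.2 h0), ?_⟩
  apply mul_left_cancel₀ (pow_ne_zero t PowerSeries.X_ne_zero)
  calc _ = (q : R⟦X⟧) * f := by rw [hqr]; push_cast; ring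
    _ = _ := by rw [h]; push_cast; rfl

theorem coeff_add_natDegree_eq_of_mul_eq_coe {r s : R[X]} {f : R⟦X⟧} (hr : r.coeff 0 ≠ 0)
    (h : (r : R⟦X⟧) * f = s) : ∃ N, ∀ m m', N ≤ m → N ≤ m' →
      (∀ i < r.natDegree, PowerSeries.coeff (m + i) f = PowerSeries.coeff (m' + i) f) →
      PowerSeries.coeff (m + r.natDegree) f = PowerSeries.coeff (m' + r.natDegree) f := by
  refine ⟨s.natDegree + 1, fun m m' hm hm' hwin => mul_left_cancel₀ hr ?_⟩
  have hzero : ∀ n, s.natDegree + 1 ≤ n →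
      PowerSeries.coeff (n + r.natDegree) ((r : R⟦X⟧) * f) = 0 := fun n hn => by
    rw [h, coeff_coe, coeff_eq_zero_of_natDegree_lt (by omega)]
  have hm0 := hzero m hm
  have hm0' := hzero m' hm'
  rw [coeff_add_natDegree_coe_mul, sum_range_succ'] at hm0 hm0'
  have htail : ∑ i ∈ range r.natDegree,
      r.coeff (i + 1) * PowerSeries.coeff (m + r.natDegree - (i + 1)) f =
      ∑ i ∈ range r.natDegree,
      r.coeff (i + 1) * PowerSeries.coeff (m' + r.natDegree - (i + 1)) f := by
    refine Finset.sum_congr rfl fun i hi => ?_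
    have hi : i < r.natDegree := mem_range.1 hi
    have := hwin (r.natDegree - (i + 1)) (by omega)
    rw [show m + r.natDegree - (i + 1) = m + (r.natDegree - (i + 1)) by omega,
      show m' + r.natDegree - (i + 1) = m' + (r.natDegree - (i + 1)) by omega, this]
  simp only [Nat.sub_zero] at hm0 hm0'
  rw [htail] at hm0
  exact add_left_cancel (hm0.trans hm0'.symm)

end WindowDetermined

theorem eventually_periodic_of_window_determined {α : Type*} {u : ℕ → α}
    (hfin : (Set.range u).Finite) {d N : ℕ}
    (hdet : ∀ m m', N ≤ m → N ≤ m' → (∀ i < d, u (m + i) = u (m' + i)) → u (m + d) = u (m' + d)) :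
    ∃ T > 0, ∀ᶠ n in atTop, u (n + T) = u n := by
  have := hfin.to_subtype
  obtain ⟨a, b, hab, hwin⟩ := Finite.exists_ne_map_eq_of_infinite
    fun m (i : Fin d) => (⟨u (N + m + i), Set.mem_range_self _⟩ : Set.range u)
  wlog hlt : a < b generalizing a b
  · exact this b a hab.symm hwin.symm (by omega)
  have hshift : ∀ k, ∀ i < d, u (N + a + k + i) = u (N + b + k + i) := by
    intro k
    induction k with
    | zero => exact fun i hi => congrArg Subtype.val (congrFun hwin ⟨i, hi⟩)
    | succ k ih =>
      intro i hi
      rcases Nat.lt_or_ge (i + 1) d with h | h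
      · simpa only [add_assoc, add_comm 1] using ih (i + 1) h
      · have := hdet _ _ (by omega) (by omega) ih
        rwa [show N + a + k + d = N + a + (k + 1) + i by omega,
          show N + b + k + d = N + b + (k + 1) + i by omega] at this
  refine ⟨b - a, by omega, eventually_atTop.2 ⟨N + a + d, fun n hn => ?_⟩⟩
  obtain ⟨k, rfl⟩ : ∃ k, n = N + a + k + d := ⟨n - (N + a + d), by omega⟩
  rw [show N + a + k + d + (b - a) = N + b + k + d by omega]
  exact (hdet _ _ (by omega) (by omega) (hshift k)).symm

namespace ArithmeticFunction

theorem finite_range_liouville : (Set.range liouville).Finite := by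
  refine (Set.toFinite {0, 1, -1}).subset ?_
  rintro _ ⟨n, rfl⟩
  rcases eq_or_ne n 0 with rfl | hn
  · simp
  · rcases neg_one_pow_eq_or ℤ (Ω n) with h | h <;> simp [liouville_apply hn, h]

theorem liouville_two_mul (n : ℕ) : liouville (2 * n) = -liouville n := by
  rw [liouville_apply_mul, liouville_apply two_ne_zero, cardFactors_apply_prime Nat.prime_two]
  ring

theorem not_eventually_periodic_liouville {T : ℕ} (hT : 0 < T) :
    ¬ ∀ᶠ n in atTop, liouville (n + T) = liouville n := by
  rw [eventually_atTop]
  rintro ⟨N, hN⟩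
  have hmul : ∀ k n, N ≤ n → liouville (n + k * T) = liouville n := by
    intro k
    induction k with
    | zero => simp
    | succ k ih => intro n hn; rw [Nat.succ_mul, ← add_assoc, hN _ (by omega), ih n hn]
  set n := (N + 1) * T
  have hn : N < n := Nat.lt_of_lt_of_le (Nat.lt_succ_self N) (Nat.le_mul_of_pos_right _ hT)
  have := hmul (N + 1) n hn.le
  rw [← two_mul, liouville_two_mul, neg_eq_iff_add_eq_zero, ← two_mul] at this
  exact liouville_ne_zero hn.ne_bot (by simpa using this)

end ArithmeticFunction

theorem stmt_11 :
    ¬ ∃ p q : Polynomial ℤ, q ≠ 0 ∧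
      (q : PowerSeries ℤ) * (PowerSeries.mk fun n =>
        if n = 0 then 0 else (-1 : ℤ) ^ (ArithmeticFunction.cardFactors n)) =
      (p : PowerSeries ℤ) := by
  rintro ⟨p, q, hq, h⟩
  change (q : ℤ⟦X⟧) * PowerSeries.mk liouville = p at h
  obtain ⟨r, s, hr, hrs⟩ := exists_coeff_zero_ne_zero_mul_eq hq h
  obtain ⟨N, hdet⟩ := coeff_add_natDegree_eq_of_mul_eq_coe hr hrs
  simp only [PowerSeries.coeff_mk] at hdet
  obtain ⟨T, hT, hper⟩ := eventually_periodic_of_window_determined finite_range_liouville hdet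
  exact not_eventually_periodic_liouville hT hper
end

section
/- Let f : ℕ → {-1,1} be completely multiplicative with f(p) = -1 for some prime p. Then the formal power series ∑_{n=1}^∞ f(n) z^n ∈ ℤ[[z]] is not rational: there exist no polynomials p, q ∈ ℤ[z], q ≠ 0, with q(z) ∑ f(n) z^n = p(z). -/
/-!
If `q · ∑ aₙ zⁿ = p` with `q ≠ 0`, comparing coefficients beyond `deg p` and dividing by the
lowest nonzero coefficient of `q` shows that, for large `n`, `aₙ` is determined by the `w`
preceding terms, `w` being the width of the support of `q`. With finitely many values, two
windows of `w` consecutive terms coincide, so the coefficients are eventually periodic. For a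
completely multiplicative nonvanishing `f` with eventual period `T`,
`f T · f (n + 1) = f (T n + T) = f (T n) = f T · f n`, so `f` is eventually constant, and then
`f (b ^ (k + 1)) = f (b ^ k) · f b` forces `f b = 1` for every `b > 1`, contradicting `f p₀ = -1`.
-/

open Finset Polynomial

def WindowDetermined {α : Type*} (a : ℕ → α) (w N : ℕ) : Prop :=
  ∀ m m', N ≤ m → N ≤ m' → (∀ i < w, a (m + i) = a (m' + i)) → a (m + w) = a (m' + w)

namespace WindowDetermined

variable {α : Type*} {a : ℕ → α} {w N : ℕ}

theorem apply_add_eq_of_window_eq (hdet : WindowDetermined a w N) {m₁ m₂ : ℕ}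
    (hm₁ : N ≤ m₁) (hm₂ : N ≤ m₂) (hwin : ∀ i < w, a (m₁ + i) = a (m₂ + i)) (j : ℕ) :
    a (m₁ + j) = a (m₂ + j) := by
  induction j using Nat.strong_induction_on with
  | _ j ih =>
    rcases lt_or_ge j w with hj | hj
    · exact hwin j hj
    · obtain ⟨k, rfl⟩ := Nat.exists_eq_add_of_le' hj
      have := hdet (m₁ + k) (m₂ + k) (by omega) (by omega) fun i hi => by
        simpa only [add_assoc] using ih (k + i) (by omega)
      simpa only [add_assoc] using this

theorem exists_periodic (hdet : WindowDetermined a w N) (ha : (Set.range a).Finite) :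
    ∃ M T, 0 < T ∧ ∀ n, M ≤ n → a (n + T) = a n := by
  have : Finite (Set.range a) := ha.to_subtype
  obtain ⟨m₁, m₂, hne, hwin⟩ := Finite.exists_ne_map_eq_of_infinite
    fun m (i : Fin w) => (⟨a (N + m + i), _, rfl⟩ : Set.range a)
  wlog hlt : m₁ < m₂ generalizing m₁ m₂
  · exact this m₂ m₁ hne.symm hwin.symm (hne.lt_or_gt.resolve_left hlt)
  have hper := hdet.apply_add_eq_of_window_eq (m₁ := N + m₁) (m₂ := N + m₂)
    (by omega) (by omega) fun i hi => congrArg Subtype.val (congrFun hwin ⟨i, hi⟩)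
  refine ⟨N + m₁, m₂ - m₁, by omega, fun n hn => ?_⟩
  obtain ⟨k, rfl⟩ := Nat.exists_eq_add_of_le hn
  rw [hper k]
  congr 1
  omega

end WindowDetermined

namespace PowerSeries

variable {R : Type*}

theorem coeff_coe_mul_mk_add_natDegree [Semiring R] (q : R[X]) (a : ℕ → R) (m : ℕ) :
    coeff (m + q.natDegree) ((q : R⟦X⟧) * mk a) =
      ∑ j ∈ range (q.natDegree - q.natTrailingDegree + 1),
        q.coeff (q.natDegree - j) * a (m + j) := by
  have hvD := natTrailingDegree_le_natDegree q
  calc coeff (m + q.natDegree) ((q : R⟦X⟧) * mk a)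
      = ∑ k ∈ range (m + q.natDegree + 1), q.coeff (m + q.natDegree - k) * a k := by
        rw [coeff_mul, ← Nat.sum_antidiagonal_swap]
        simpa using
          Nat.sum_antidiagonal_eq_sum_range_succ (fun k l => q.coeff l * a k) (m + q.natDegree)
    _ = ∑ k ∈ Ico m (m + (q.natDegree - q.natTrailingDegree + 1)),
        q.coeff (m + q.natDegree - k) * a k := by
        refine (sum_subset (fun k hk => ?_) fun k hk' hk => ?_).symm
        · simp only [mem_Ico, mem_range] at hk ⊢
          omega
        · simp only [mem_range, mem_Ico, not_and_or, not_le, not_lt] at hk' hk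
          rcases hk with hk | hk
          · rw [coeff_eq_zero_of_natDegree_lt (by omega), zero_mul]
          · rw [coeff_eq_zero_of_lt_natTrailingDegree (by omega), zero_mul]
    _ = _ := by
        rw [sum_Ico_eq_sum_range, Nat.add_sub_cancel_left]
        simp only [Nat.add_sub_add_left]

variable [CommRing R] [IsDomain R] {p q : R[X]} {a : ℕ → R}

theorem windowDetermined_of_coe_mul_mk_eq (hq : q ≠ 0) (h : (q : R⟦X⟧) * mk a = p) :
    WindowDetermined a (q.natDegree - q.natTrailingDegree) (p.natDegree + 1) := by
  intro m m' hm hm' hwin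
  have hrec : ∀ n, p.natDegree < n → ∑ j ∈ range (q.natDegree - q.natTrailingDegree + 1),
      q.coeff (q.natDegree - j) * a (n + j) = 0 := fun n hn => by
    rw [← coeff_coe_mul_mk_add_natDegree, h, Polynomial.coeff_coe,
      coeff_eq_zero_of_natDegree_lt (by omega)]
  have hv : q.natDegree - (q.natDegree - q.natTrailingDegree) = q.natTrailingDegree :=
    Nat.sub_sub_self (natTrailingDegree_le_natDegree q)
  have e := (hrec m hm).trans (hrec m' hm').symm
  rw [sum_range_succ, sum_range_succ, hv,
    sum_congr rfl fun i hi => by rw [hwin i (mem_range.mp hi)], add_left_cancel_iff] at e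
  exact mul_left_cancel₀ (trailingCoeff_nonzero_iff_nonzero.mpr hq) e

theorem exists_periodic_of_coe_mul_mk_eq (hq : q ≠ 0) (h : (q : R⟦X⟧) * mk a = p)
    (ha : (Set.range a).Finite) : ∃ M T, 0 < T ∧ ∀ n, M ≤ n → a (n + T) = a n :=
  (windowDetermined_of_coe_mul_mk_eq hq h).exists_periodic ha

end PowerSeries

section CompletelyMultiplicative

variable {M₀ : Type*} [MonoidWithZero M₀] [IsLeftCancelMulZero M₀] {f : ℕ → M₀}

theorem succ_eq_of_periodic_of_mul (hmul : ∀ m n, 1 ≤ m → 1 ≤ n → f (m * n) = f m * f n)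
    {M T : ℕ} (hT : 0 < T) (hfT : f T ≠ 0) (hper : ∀ n, M ≤ n → f (n + T) = f n) {n : ℕ}
    (hn : M < n) : f (n + 1) = f n := by
  have e := hmul T (n + 1) hT (by omega)
  rw [mul_add_one, hper (T * n) (le_trans hn.le (Nat.le_mul_of_pos_left n hT)),
    hmul T n hT (by omega)] at e
  exact (mul_left_cancel₀ hfT e).symm

theorem eq_one_of_periodic_of_mul (hmul : ∀ m n, 1 ≤ m → 1 ≤ n → f (m * n) = f m * f n)
    (hne : ∀ n, 1 ≤ n → f n ≠ 0) {M T : ℕ} (hT : 0 < T) (hper : ∀ n, M ≤ n → f (n + T) = f n)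
    {b : ℕ} (hb : 1 < b) : f b = 1 := by
  have hconst : ∀ n, M < n → f n = f (M + 1) := fun n hn => by
    induction n, Nat.succ_le_of_lt hn using Nat.le_induction with
    | base => rfl
    | succ n hn ih =>
      rw [succ_eq_of_periodic_of_mul hmul hT (hne T hT) hper (by omega), ih (by omega)]
  have hlt : M < b ^ (M + 1) := (Nat.lt_succ_self M).trans (Nat.lt_pow_self hb)
  have hpow : 1 ≤ b ^ (M + 1) := Nat.one_le_pow _ _ (by omega)
  have e := hmul (b ^ (M + 1)) b hpow hb.le
  rw [← pow_succ, hconst _ hlt, hconst _ (hlt.trans (Nat.pow_lt_pow_right hb (by omega)))] at e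
  exact (mul_eq_left₀ (hne _ (by omega))).mp e.symm

end CompletelyMultiplicative

theorem stmt_13_general (f : ℕ → ℤ)
    (hmul : ∀ m n, 1 ≤ m → 1 ≤ n → f (m * n) = f m * f n)
    (hval : ∀ n, 1 ≤ n → f n = -1 ∨ f n = 1)
    (p₀ : ℕ) (hp₀ : p₀.Prime) (hfp : f p₀ = -1) :
    ¬ ∃ p q : Polynomial ℤ, q ≠ 0 ∧
      (q : PowerSeries ℤ) * (PowerSeries.mk fun n =>
        if n = 0 then 0 else f n) = (p : PowerSeries ℤ) := by
  rintro ⟨p, q, hq, h⟩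
  have hne : ∀ n, 1 ≤ n → f n ≠ 0 := fun n hn => by rcases hval n hn with h | h <;> simp [h]
  have hfin : (Set.range fun n => if n = 0 then 0 else f n).Finite := by
    refine (Set.toFinite ({0, -1, 1} : Set ℤ)).subset ?_
    rintro _ ⟨n, rfl⟩
    rcases Nat.eq_zero_or_pos n with rfl | hn
    · simp
    · rcases hval n hn with h | h <;> simp [h, hn.ne']
  obtain ⟨M, T, hT, hper⟩ := PowerSeries.exists_periodic_of_coe_mul_mk_eq hq h hfin
  have hper' : ∀ n, M + 1 ≤ n → f (n + T) = f n := fun n hn => by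
    simpa [show n ≠ 0 by omega] using hper n (by omega)
  have := eq_one_of_periodic_of_mul hmul hne hT hper' hp₀.one_lt
  rw [hfp] at this
  norm_num at this

theorem stmt_13 (f : ℕ → ℤ) (hf1 : f 1 = 1)
    (hmul : ∀ m n, 1 ≤ m → 1 ≤ n → f (m * n) = f m * f n)
    (hval : ∀ n, 1 ≤ n → f n = -1 ∨ f n = 1)
    (p₀ : ℕ) (hp₀ : p₀.Prime) (hfp : f p₀ = -1) :
    ¬ ∃ p q : Polynomial ℤ, q ≠ 0 ∧
      (q : PowerSeries ℤ) * (PowerSeries.mk fun n =>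
        if n = 0 then 0 else f n) = (p : PowerSeries ℤ) :=
  stmt_13_general f hmul hval p₀ hp₀ hfp
end
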